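/- Cone-based positivity of the stability tensor: let Ω ⊂ ℝ^d satisfy the interior cone condition with angle θ > 0 and radius λ > 0, and let ρ(y,x) ≥ γ̃/(ε^d ω_d |y-x|) on Ω ∩ H_ε(x). Then the matrix A(x) = ∫_{Ω∩H_ε(x)} ρ(y,x) e_{y-x} ⊗ e_{y-x} dy satisfies ηᵀA(x)η ≥ γ|η|² for all unit vectors η and all x ∈ Ω, for some γ > 0 depending only on θ, λ, ε, d, γ̃. -/

import Mathlib

/-!
The cone at `x` with axis `e` contains the ball `B` of radius `r = λ (1 - cos θ) / 4` centred
at `x + (λ/2) e`, and every `y ∈ B` satisfies `0 < |y - x| < λ`. On `B` the integrand is at least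
`γ̃ / (ε^d ω_d λ³) ⟪y - x, η⟫²`. Translating `B` to the origin only adds a nonnegative term (the
cross term is odd), and by reflection invariance `∫_{B(0,r)} ⟪z, η⟫² dz = κ(r) |η|²` with
`κ(r) > 0` independent of `x`, `Ω` and `ρ`.
-/

open MeasureTheory
open scoped RealInnerProductSpace

/-- The unit vector `e_{y-x} = (y-x)/|y-x|`. -/
noncomputable def unitVec {d : ℕ} (y x : EuclideanSpace ℝ (Fin d)) :
    EuclideanSpace ℝ (Fin d) := ‖y - x‖⁻¹ • (y - x)

/-- The spherical cone with apex `x`, axis `e`, radius `lam` and half-aperture `θ`. -/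
def sphericalCone {d : ℕ} (x e : EuclideanSpace ℝ (Fin d)) (lam θ : ℝ) :
    Set (EuclideanSpace ℝ (Fin d)) :=
  {y | ‖y - x‖ ≤ lam ∧ ‖y - x‖ * Real.cos θ ≤ ⟪y - x, e⟫}

open Metric

theorem Continuous.integrableOn_ball {X F : Type*} [MetricSpace X] [ProperSpace X]
    [MeasurableSpace X] [OpensMeasurableSpace X] {μ : Measure X} [IsFiniteMeasureOnCompacts μ]
    [NormedAddCommGroup F] {f : X → F} (hf : Continuous f) (c : X) (r : ℝ) :
    IntegrableOn f (ball c r) μ :=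
  (hf.continuousOn.integrableOn_compact (isCompact_closedBall c r)).mono_set
    ball_subset_closedBall

section BallMoments

variable {E : Type*} [NormedAddCommGroup E] [InnerProductSpace ℝ E] [FiniteDimensional ℝ E]
  [MeasurableSpace E] [BorelSpace E]

theorem integral_inner_ball_zero (r : ℝ) (η : E) : ∫ z in ball (0 : E) r, ⟪z, η⟫ = 0 := by
  have h := (Measure.measurePreserving_neg (volume : Measure E)).setIntegral_preimage_emb
    (MeasurableEquiv.neg E).measurableEmbedding (fun z => ⟪z, η⟫) (ball 0 r)
  simp only [Set.neg_preimage, neg_ball, neg_zero, inner_neg_left, integral_neg] at h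
  linarith

theorem integral_inner_sq_ball_zero_le (r : ℝ) (c a η : E) :
    ∫ z in ball (0 : E) r, ⟪z, η⟫ ^ 2 ≤ ∫ y in ball c r, ⟪y - a, η⟫ ^ 2 := by
  have htrans := (measurePreserving_add_right (volume : Measure E) c).setIntegral_preimage_emb
    (MeasurableEquiv.addRight c).measurableEmbedding (fun y => ⟪y - a, η⟫ ^ 2) (ball c r)
  have hpre : (· + c) ⁻¹' ball c r = ball (0 : E) r := by
    ext z; simp [dist_eq_norm]
  have hexpand : ∀ z : E, ⟪z + c - a, η⟫ ^ 2
      = ⟪z, η⟫ ^ 2 + (2 * ⟪c - a, η⟫ * ⟪z, η⟫ + ⟪c - a, η⟫ ^ 2) := fun z => by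
    rw [add_sub_assoc, inner_add_left]; ring
  have hsq : IntegrableOn (fun z : E => ⟪z, η⟫ ^ 2) (ball 0 r) :=
    (by fun_prop : Continuous fun z : E => ⟪z, η⟫ ^ 2).integrableOn_ball _ _
  have hlin : IntegrableOn (fun z : E => 2 * ⟪c - a, η⟫ * ⟪z, η⟫) (ball 0 r) :=
    (by fun_prop : Continuous fun z : E => 2 * ⟪c - a, η⟫ * ⟪z, η⟫).integrableOn_ball _ _
  have hrest : IntegrableOn (fun z : E => 2 * ⟪c - a, η⟫ * ⟪z, η⟫ + ⟪c - a, η⟫ ^ 2) (ball 0 r) :=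
    (by fun_prop : Continuous fun z : E => _).integrableOn_ball _ _
  rw [← htrans, hpre]
  simp only [hexpand]
  rw [integral_add hsq hrest,
    integral_add hlin (continuous_const.integrableOn_ball _ _),
    integral_const_mul, integral_inner_ball_zero, setIntegral_const]
  have : 0 ≤ volume.real (ball (0 : E) r) • ⟪c - a, η⟫ ^ 2 := by positivity
  linarith

theorem integral_inner_sq_ball_zero_eq_of_norm_eq (r : ℝ) {u v : E} (h : ‖u‖ = ‖v‖) :
    ∫ z in ball (0 : E) r, ⟪z, u⟫ ^ 2 = ∫ z in ball (0 : E) r, ⟪z, v⟫ ^ 2 := by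
  set T := (ℝ ∙ (u - v))ᗮ.reflection
  have hpre : T ⁻¹' ball (0 : E) r = ball 0 r := by
    ext z; simp
  calc ∫ z in ball (0 : E) r, ⟪z, u⟫ ^ 2 = ∫ z in T ⁻¹' ball (0 : E) r, ⟪T z, T u⟫ ^ 2 := by
        simp only [hpre, LinearIsometryEquiv.inner_map_map]
    _ = ∫ z in ball (0 : E) r, ⟪z, v⟫ ^ 2 := by
        rw [Submodule.reflection_sub h]
        exact T.measurePreserving.setIntegral_preimage_emb T.toHomeomorph.measurableEmbedding
          (fun z => ⟪z, v⟫ ^ 2) (ball 0 r)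

theorem integral_inner_sq_ball_zero_eq_mul_norm_sq (r : ℝ) {u : E} (hu : ‖u‖ = 1) (η : E) :
    ∫ z in ball (0 : E) r, ⟪z, η⟫ ^ 2 = (∫ z in ball (0 : E) r, ⟪z, u⟫ ^ 2) * ‖η‖ ^ 2 := by
  rcases eq_or_ne η 0 with rfl | hη
  · simp
  have hunit : ‖‖η‖⁻¹ • η‖ = ‖u‖ := by
    rw [norm_smul, norm_inv, norm_norm, inv_mul_cancel₀ (norm_ne_zero_iff.mpr hη), hu]
  have hscale : ∀ z : E, ⟪z, η⟫ ^ 2 = ⟪z, ‖η‖⁻¹ • η⟫ ^ 2 * ‖η‖ ^ 2 := fun z => by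
    rw [real_inner_smul_right, mul_pow, inv_pow, mul_right_comm,
      inv_mul_cancel₀ (by positivity), one_mul]
  simp only [hscale]
  rw [integral_mul_const, integral_inner_sq_ball_zero_eq_of_norm_eq r hunit]

theorem integral_inner_sq_ball_zero_pos {r : ℝ} (hr : 0 < r) {u : E} (hu : u ≠ 0) :
    0 < ∫ z in ball (0 : E) r, ⟪z, u⟫ ^ 2 := by
  have hcont : Continuous fun z : E => ⟪z, u⟫ ^ 2 := by fun_prop
  rw [setIntegral_pos_iff_support_of_nonneg_ae (ae_of_all _ fun z => sq_nonneg _)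
    (hcont.integrableOn_ball _ _)]
  refine ((isOpen_ne_fun hcont continuous_const).inter isOpen_ball).measure_pos _ ?_
  refine ⟨(r / (2 * ‖u‖)) • u, ?_, ?_⟩
  · simp [real_inner_smul_left, hu, hr.ne']
  · rw [mem_ball_zero_iff, norm_smul, Real.norm_of_nonneg (by positivity)]
    field_simp
    linarith

end BallMoments

section Cone

variable {d : ℕ}

theorem inner_unitVec_sq (y x η : EuclideanSpace ℝ (Fin d)) :
    ⟪unitVec y x, η⟫ ^ 2 = ⟪y - x, η⟫ ^ 2 / ‖y - x‖ ^ 2 := by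
  rw [unitVec, real_inner_smul_left, mul_pow, inv_pow, inv_mul_eq_div]

theorem norm_unitVec_le_one (y x : EuclideanSpace ℝ (Fin d)) : ‖unitVec y x‖ ≤ 1 := by
  rw [unitVec, norm_smul, norm_inv, norm_norm]
  exact inv_mul_le_one

theorem integrableOn_mul_inner_unitVec_sq {f : EuclideanSpace ℝ (Fin d) → ℝ}
    {s : Set (EuclideanSpace ℝ (Fin d))} (hf : IntegrableOn f s) (x η : EuclideanSpace ℝ (Fin d)) :
    IntegrableOn (fun y => f y * ⟪unitVec y x, η⟫ ^ 2) s := by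
  refine hf.mul_bdd (c := ‖η‖ ^ 2) ?_ (ae_of_all _ fun y => ?_)
  · exact (((measurable_id.sub_const x).norm.inv.smul (measurable_id.sub_const x)).inner
      measurable_const).pow_const 2 |>.aestronglyMeasurable
  · rw [norm_pow, Real.norm_eq_abs, sq_abs]
    calc ⟪unitVec y x, η⟫ ^ 2 ≤ (‖unitVec y x‖ * ‖η‖) ^ 2 := by
          rw [← sq_abs]; gcongr; exact abs_real_inner_le_norm _ _
      _ ≤ ‖η‖ ^ 2 := by
          gcongr; exact mul_le_of_le_one_left (norm_nonneg _) (norm_unitVec_le_one y x)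

theorem div_pow_three_mul_inner_sq_le {x y η : EuclideanSpace ℝ (Fin d)} {c lam ρ : ℝ}
    (hc : 0 ≤ c) (hyx : 0 < ‖y - x‖) (hlam : ‖y - x‖ ≤ lam) (hρ : c / ‖y - x‖ ≤ ρ) :
    c / lam ^ 3 * ⟪y - x, η⟫ ^ 2 ≤ ρ * ⟪unitVec y x, η⟫ ^ 2 := by
  rw [inner_unitVec_sq, mul_div_assoc']
  calc c / lam ^ 3 * ⟪y - x, η⟫ ^ 2 ≤ c / ‖y - x‖ ^ 3 * ⟪y - x, η⟫ ^ 2 := by gcongr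
    _ = c / ‖y - x‖ * ⟪y - x, η⟫ ^ 2 / ‖y - x‖ ^ 2 := by field_simp
    _ ≤ ρ * ⟪y - x, η⟫ ^ 2 / ‖y - x‖ ^ 2 := by gcongr

/-- The radius `r = lam (1 - cos θ) / 4` is chosen so that `r (1 + cos θ) ≤ (lam / 2) (1 - cos θ)`,
which is what the aperture condition needs for `y - x = (lam / 2) • e + z` with `‖z‖ < r`. -/
theorem ball_subset_sphericalCone {x e : EuclideanSpace ℝ (Fin d)} (he : ‖e‖ = 1) {lam θ : ℝ}
    (hlam : 0 ≤ lam) (hθ : 0 ≤ Real.cos θ) :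
    ball (x + (lam / 2) • e) (lam * (1 - Real.cos θ) / 4) ⊆ sphericalCone x e lam θ := by
  intro y hy
  set z := y - (x + (lam / 2) • e)
  have hz : ‖z‖ < lam * (1 - Real.cos θ) / 4 := by rwa [mem_ball, dist_eq_norm] at hy
  have hyx : y - x = (lam / 2) • e + z := by simp only [z]; abel
  have hnorm : ‖y - x‖ ≤ lam / 2 + ‖z‖ := by
    rw [hyx]
    refine (norm_add_le _ _).trans_eq ?_
    rw [norm_smul, he, Real.norm_of_nonneg (by positivity), mul_one]
  have hinner : lam / 2 - ‖z‖ ≤ ⟪y - x, e⟫ := by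
    rw [hyx, inner_add_left, real_inner_smul_left, real_inner_self_eq_norm_sq, he]
    have := (abs_le.mp ((abs_real_inner_le_norm z e).trans_eq (by rw [he, mul_one]))).1
    linarith
  have hcos : Real.cos θ ≤ 1 := Real.cos_le_one θ
  refine ⟨by nlinarith, ?_⟩
  calc ‖y - x‖ * Real.cos θ ≤ (lam / 2 + ‖z‖) * Real.cos θ := by gcongr
    _ ≤ lam / 2 - ‖z‖ := by nlinarith [norm_nonneg z]
    _ ≤ ⟪y - x, e⟫ := hinner

theorem ball_add_smul_subset_ball_diff {x e : EuclideanSpace ℝ (Fin d)} (he : ‖e‖ = 1) {lam r : ℝ}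
    (hr : r < lam / 2) : ball (x + (lam / 2) • e) r ⊆ ball x lam \ {x} := by
  have hdist : dist (x + (lam / 2) • e) x = |lam| / 2 := by
    rw [dist_eq_norm, add_sub_cancel_left, norm_smul, he, mul_one, Real.norm_eq_abs, abs_div,
      abs_two]
  intro y hy
  have hr0 : 0 < r := dist_nonneg.trans_lt hy
  have hlam : |lam| = lam := abs_of_pos (by linarith)
  refine ⟨ball_subset_ball' (by linarith) hy, fun hyx : y = x => ?_⟩
  rw [hyx, mem_ball, dist_comm, hdist] at hy
  linarith

theorem mul_integral_inner_sq_le_integral_mul_inner_unitVec_sq {S : Set (EuclideanSpace ℝ (Fin d))}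
    (hS : MeasurableSet S) {x c η : EuclideanSpace ℝ (Fin d)} {r lam κ : ℝ}
    (hcS : ball c r ⊆ S) (hcx : ball c r ⊆ ball x lam \ {x}) (hκ : 0 ≤ κ)
    {f : EuclideanSpace ℝ (Fin d) → ℝ} (hf : IntegrableOn f S)
    (hfS : ∀ y ∈ S, y ≠ x → κ / ‖y - x‖ ≤ f y) :
    κ / lam ^ 3 * ∫ y in ball c r, ⟪y - x, η⟫ ^ 2 ≤ ∫ y in S, f y * ⟪unitVec y x, η⟫ ^ 2 := by
  have hint := integrableOn_mul_inner_unitVec_sq hf x η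
  rw [← integral_const_mul]
  calc ∫ y in ball c r, κ / lam ^ 3 * ⟪y - x, η⟫ ^ 2
      ≤ ∫ y in ball c r, f y * ⟪unitVec y x, η⟫ ^ 2 := by
        refine setIntegral_mono_on ?_ (hint.mono_set hcS) measurableSet_ball fun y hy => ?_
        · exact (by fun_prop : Continuous fun y => κ / lam ^ 3 * ⟪y - x, η⟫ ^ 2).integrableOn_ball
            _ _
        have hyx : y ≠ x := (hcx hy).2
        have hyx' : 0 < ‖y - x‖ := norm_pos_iff.mpr (sub_ne_zero.mpr hyx)
        have hlam : ‖y - x‖ ≤ lam := (mem_ball_iff_norm.mp (hcx hy).1).le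
        exact div_pow_three_mul_inner_sq_le hκ hyx' hlam (hfS y (hcS hy) hyx)
    _ ≤ ∫ y in S, f y * ⟪unitVec y x, η⟫ ^ 2 := by
        refine setIntegral_mono_set hint
          ((ae_restrict_iff' hS).mpr (ae_of_all _ fun y hy => ?_)) hcS.eventuallyLE
        rcases eq_or_ne y x with rfl | hyx
        · simp [unitVec]
        · exact mul_nonneg ((by positivity : 0 ≤ κ / ‖y - x‖).trans (hfS y hy hyx)) (sq_nonneg _)

end Cone

theorem stmt_16 (d : ℕ) (hd : d = 2 ∨ d = 3) (θ lam ε γt : ℝ)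
    (hθ : 0 < θ) (hθ2 : θ < Real.pi / 2) (hlam : 0 < lam) (hlamε : lam ≤ ε)
    (hε : 0 < ε) (hγt : 0 < γt) :
    -- `γ` depends only on `θ`, `lam`, `ε`, `d`, `γt`
    ∃ γ > 0, ∀ (Ω : Set (EuclideanSpace ℝ (Fin d))),
      MeasurableSet Ω → Bornology.IsBounded Ω →
      (∀ x ∈ Ω, ∃ e : EuclideanSpace ℝ (Fin d), ‖e‖ = 1 ∧
        sphericalCone x e lam θ ⊆ Ω) →
      ∀ (ρ : EuclideanSpace ℝ (Fin d) → EuclideanSpace ℝ (Fin d) → ℝ),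
        (∀ x ∈ Ω, ∀ y ∈ Ω ∩ Metric.ball x ε, y ≠ x →
          γt / (ε ^ d *
            (volume (Metric.ball (0 : EuclideanSpace ℝ (Fin d)) 1)).toReal * ‖y - x‖)
            ≤ ρ y x) →
        (∀ x ∈ Ω, IntegrableOn (fun y => ρ y x) (Ω ∩ Metric.ball x ε)) →
        ∀ x ∈ Ω, ∀ η : EuclideanSpace ℝ (Fin d),
          γ * ‖η‖ ^ 2 ≤ ∫ y in Ω ∩ Metric.ball x ε, ρ y x * ⟪unitVec y x, η⟫ ^ 2 := by
  have hcos0 : 0 < Real.cos θ := Real.cos_pos_of_mem_Ioo ⟨by linarith [Real.pi_pos], hθ2⟩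
  have hcos1 : Real.cos θ < 1 := by
    simpa using Real.cos_lt_cos_of_nonneg_of_le_pi le_rfl (by linarith [Real.pi_pos]) hθ
  set r := lam * (1 - Real.cos θ) / 4
  have hr : 0 < r := by simp only [r]; nlinarith
  have hrlam : r < lam / 2 := by simp only [r]; nlinarith
  set κ := γt / (ε ^ d * (volume (ball (0 : EuclideanSpace ℝ (Fin d)) 1)).toReal)
  have hκ : 0 < κ := by
    have := ENNReal.toReal_pos (measure_ball_pos volume (0 : EuclideanSpace ℝ (Fin d)) one_pos).ne'
      measure_ball_lt_top.ne
    positivity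
  set u : EuclideanSpace ℝ (Fin d) := EuclideanSpace.single ⟨0, by omega⟩ 1
  have hu : ‖u‖ = 1 := by simp [u]
  have hmoment := integral_inner_sq_ball_zero_pos hr (norm_ne_zero_iff.mp (hu.trans_ne one_ne_zero))
  refine ⟨κ / lam ^ 3 * ∫ z in ball 0 r, ⟪z, u⟫ ^ 2, by positivity, ?_⟩
  intro Ω hΩ _ hcone ρ hρ hρint x hx η
  obtain ⟨e, he, heΩ⟩ := hcone x hx
  have hBx := ball_add_smul_subset_ball_diff (x := x) he hrlam
  have hB : ball (x + (lam / 2) • e) r ⊆ Ω ∩ ball x ε := fun y hy =>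
    ⟨heΩ (ball_subset_sphericalCone he hlam.le hcos0.le hy), ball_subset_ball hlamε (hBx hy).1⟩
  calc κ / lam ^ 3 * (∫ z in ball 0 r, ⟪z, u⟫ ^ 2) * ‖η‖ ^ 2
      = κ / lam ^ 3 * ∫ z in ball 0 r, ⟪z, η⟫ ^ 2 := by
        rw [integral_inner_sq_ball_zero_eq_mul_norm_sq r hu η, mul_assoc]
    _ ≤ κ / lam ^ 3 * ∫ y in ball (x + (lam / 2) • e) r, ⟪y - x, η⟫ ^ 2 := by
        gcongr; exact integral_inner_sq_ball_zero_le r _ x η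
    _ ≤ ∫ y in Ω ∩ ball x ε, ρ y x * ⟪unitVec y x, η⟫ ^ 2 :=
        mul_integral_inner_sq_le_integral_mul_inner_unitVec_sq (hΩ.inter measurableSet_ball) hB
          hBx hκ.le (hρint x hx) fun y hy hyx => by rw [div_div]; exact hρ x hx y hy hyx
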